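/- arXiv:2502.09498 — 4 statements merged into one kernel-verified Lean document; each statement's English description precedes it below -/
import Mathlib

section
/- Let σ = (1,2,3,4,5,6,7,8,9) and τ = (1,3,4,7,8,2,5,6,9) be cyclic permutations of {1,...,9} (written in cycle notation). Then the commutator σ⁻¹ τ⁻¹ σ τ equals the 9-cycle (1,2,4,6,8,9,7,5,3); in particular it is a cycle of length 9. -/
set_option maxRecDepth 10000

/-- For `σ = (1,…,9)` and `τ = (1,3,4,7,8,2,5,6,9)` (written zero-based on `Fin 9`),
the commutator `σ⁻¹ τ⁻¹ σ τ` is the 9-cycle `(1,2,4,6,8,9,7,5,3)`. -/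
theorem stmt_12 (σ τ : Equiv.Perm (Fin 9))
    (hσ : σ = ([0, 1, 2, 3, 4, 5, 6, 7, 8] : List (Fin 9)).formPerm)
    (hτ : τ = ([0, 2, 3, 6, 7, 1, 4, 5, 8] : List (Fin 9)).formPerm) :
    σ⁻¹ * τ⁻¹ * σ * τ = ([0, 1, 3, 5, 7, 8, 6, 4, 2] : List (Fin 9)).formPerm ∧
      (σ⁻¹ * τ⁻¹ * σ * τ).IsCycle ∧ (σ⁻¹ * τ⁻¹ * σ * τ).support.card = 9 := by
  subst hσ hτ
  have heq : (([0, 1, 2, 3, 4, 5, 6, 7, 8] : List (Fin 9)).formPerm)⁻¹ *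
      (([0, 2, 3, 6, 7, 1, 4, 5, 8] : List (Fin 9)).formPerm)⁻¹ *
      ([0, 1, 2, 3, 4, 5, 6, 7, 8] : List (Fin 9)).formPerm *
      ([0, 2, 3, 6, 7, 1, 4, 5, 8] : List (Fin 9)).formPerm =
      ([0, 1, 3, 5, 7, 8, 6, 4, 2] : List (Fin 9)).formPerm := by
    decide
  refine ⟨heq, ?_, ?_⟩
  · rw [heq]
    apply List.isCycle_formPerm <;> decide
  · rw [heq]
    decide
end

section
/- Let σ = (1,2,3,4,5,6,7,8,9) and τ = (1,3,4,7,8,2,5,6,9) be cyclic permutations of {1,...,9}. Then the subgroup of the symmetric group on 9 elements generated by σ and τ equals the alternating group Alt 9. -/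
/-!
Both generators are even. The group `G = ⟨σ, τ⟩` contains the rotation `σ : x ↦ x + 1` of
`Fin 9`, so it is transitive, and a block of `G` through `0` is a block of the rotations:
`{0}`, `{0, 3, 6}` or everything. Since `τ` maps `{0, 3, 6}` to `{2, 4, 6}`, `G` is primitive.
It contains the 3-cycle `σ⁵τ² = (0 8 7)`, so by Jordan's theorem it contains `Alt 9`.
-/

open Equiv Equiv.Perm MulAction Subgroup
open Fin.NatCast

theorem finRotate_pow_apply {n : ℕ} [NeZero n] (k : ℕ) (x : Fin n) :
    (finRotate n ^ k) x = x + k := by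
  induction k with
  | zero => simp
  | succ k ih => rw [pow_succ', Perm.mul_apply, ih, finRotate_apply, Nat.cast_succ, add_assoc]

theorem isPretransitive_of_finRotate_mem {n : ℕ} [NeZero n] {G : Subgroup (Perm (Fin n))}
    (hG : finRotate n ∈ G) : IsPretransitive G (Fin n) :=
  ⟨fun x y => ⟨⟨_, pow_mem hG (y - x).val⟩, by
    rw [Subgroup.mk_smul, Perm.smul_def, finRotate_pow_apply, Fin.cast_val_eq_self,
      add_sub_cancel]⟩⟩

theorem MulAction.IsBlock.mapsTo_self_or_mapsTo_compl {G X : Type*} [Group G] [MulAction G X]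
    {B : Set X} (hB : IsBlock G B) (g : G) :
    Set.MapsTo (g • ·) B B ∨ Set.MapsTo (g • ·) B Bᶜ := by
  rcases hB.smul_eq_or_disjoint g with h | h
  · exact Or.inl fun x hx => h ▸ Set.smul_mem_smul_set hx
  · exact Or.inr fun x hx => h.notMem_of_mem_left (Set.smul_mem_smul_set hx)

theorem Equiv.Perm.closure_eq_alternatingGroup_of_isPreprimitive {α : Type*} [Fintype α]
    [DecidableEq α] {S : Set (Perm α)} (hS : ∀ g ∈ S, sign g = 1)
    (hprim : IsPreprimitive (closure S) α) {g : Perm α} (hg : g.IsThreeCycle)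
    (hgS : g ∈ closure S) : closure S = alternatingGroup α :=
  le_antisymm ((closure_le _).2 fun g hg => mem_alternatingGroup.2 (hS g hg))
    (alternatingGroup_le_of_isPreprimitive_of_isThreeCycle_mem hprim hg hgS)

notation "τ₉" => List.formPerm ([0, 2, 3, 6, 7, 1, 4, 5, 8] : List (Fin 9))

theorem formPerm_range_nine_eq_finRotate :
    ([0, 1, 2, 3, 4, 5, 6, 7, 8] : List (Fin 9)).formPerm = finRotate 9 := by
  decide

theorem sign_tau : sign τ₉ = 1 := by
  decide

set_option maxRecDepth 10000 in
theorem finRotate_pow_five_mul_tau_sq : finRotate 9 ^ 5 * τ₉ ^ 2 = swap 0 7 * swap 0 8 := by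
  decide

set_option maxRecDepth 10000 in
theorem card_le_one_or_eq_univ_of_rotation_blocks : ∀ B : Finset (Fin 9), 0 ∈ B →
    (∀ k : Fin 9, (∀ x ∈ B, x + k ∈ B) ∨ ∀ x ∈ B, x + k ∉ B) →
    ((∀ x ∈ B, τ₉ x ∈ B) ∨ ∀ x ∈ B, τ₉ x ∉ B) → B.card ≤ 1 ∨ B = Finset.univ := by
  decide

theorem isPreprimitive_of_finRotate_mem_of_tau_mem {G : Subgroup (Perm (Fin 9))}
    (hrot : finRotate 9 ∈ G) (hτ : τ₉ ∈ G) : IsPreprimitive G (Fin 9) := by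
  have := isPretransitive_of_finRotate_mem hrot
  refine IsPreprimitive.of_isTrivialBlock_base 0 fun {B} h0 hB => ?_
  obtain ⟨F, rfl⟩ := B.toFinite.exists_finset_coe
  have hrotF (k : Fin 9) : (∀ x ∈ F, x + k ∈ F) ∨ ∀ x ∈ F, x + k ∉ F := by
    have := hB.mapsTo_self_or_mapsTo_compl ⟨_, pow_mem hrot k.val⟩
    simpa only [Set.MapsTo, Subgroup.mk_smul, Perm.smul_def, finRotate_pow_apply,
      Fin.cast_val_eq_self, Finset.mem_coe, Set.mem_compl_iff] using this
  have hτF : (∀ x ∈ F, τ₉ x ∈ F) ∨ ∀ x ∈ F, τ₉ x ∉ F := by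
    simpa only [Set.MapsTo, Subgroup.mk_smul, Perm.smul_def, Finset.mem_coe,
      Set.mem_compl_iff] using hB.mapsTo_self_or_mapsTo_compl ⟨_, hτ⟩
  rcases card_le_one_or_eq_univ_of_rotation_blocks F h0 hrotF hτF with h | rfl
  · exact Or.inl (Finset.card_le_one.1 h)
  · exact Or.inr Finset.coe_univ

/-- For `σ = (1,…,9)` and `τ = (1,3,4,7,8,2,5,6,9)` (zero-based on `Fin 9`),
the subgroup generated by `σ` and `τ` is the alternating group `Alt 9`. -/
theorem stmt_13 (σ τ : Equiv.Perm (Fin 9))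
    (hσ : σ = ([0, 1, 2, 3, 4, 5, 6, 7, 8] : List (Fin 9)).formPerm)
    (hτ : τ = ([0, 2, 3, 6, 7, 1, 4, 5, 8] : List (Fin 9)).formPerm) :
    Subgroup.closure {σ, τ} = alternatingGroup (Fin 9) := by
  obtain rfl : σ = finRotate 9 := hσ.trans formPerm_range_nine_eq_finRotate
  subst hτ
  have hrot : finRotate 9 ∈ closure {finRotate 9, τ₉} := subset_closure (Set.mem_insert _ _)
  have hτ : τ₉ ∈ closure {finRotate 9, τ₉} := subset_closure (Set.mem_insert_of_mem _ rfl)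
  have hS : ∀ g ∈ ({finRotate 9, τ₉} : Set (Perm (Fin 9))), sign g = 1 := by
    rintro g (rfl | rfl)
    · rw [sign_finRotate]; norm_num
    · exact sign_tau
  have h3 : (finRotate 9 ^ 5 * τ₉ ^ 2).IsThreeCycle := by
    rw [finRotate_pow_five_mul_tau_sq]
    exact isThreeCycle_swap_mul_swap_same (by decide) (by decide) (by decide)
  exact closure_eq_alternatingGroup_of_isPreprimitive hS
    (isPreprimitive_of_finRotate_mem_of_tau_mem hrot hτ) h3
    (mul_mem (pow_mem hrot 5) (pow_mem hτ 2))
end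

section
/- Let σ = (1,2,3,4,5,6,7,8,9,10,11) and τ = (1,3,8,11,6,4,5,2,9,10,7) be cyclic permutations of {1,...,11}. Then the commutator σ⁻¹ τ⁻¹ σ τ equals the 11-cycle (1,5,11,9,7,4,10,2,8,6,3); in particular it is a cycle of length 11. -/
set_option maxRecDepth 10000


/-- For `σ = (1,…,11)` and `τ = (1,3,8,11,6,4,5,2,9,10,7)` (zero-based on `Fin 11`),
the commutator `σ⁻¹ τ⁻¹ σ τ` is the 11-cycle `(1,5,11,9,7,4,10,2,8,6,3)`. -/
theorem stmt_18 (σ τ : Equiv.Perm (Fin 11))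
    (hσ : σ = ([0, 1, 2, 3, 4, 5, 6, 7, 8, 9, 10] : List (Fin 11)).formPerm)
    (hτ : τ = ([0, 2, 7, 10, 5, 3, 4, 1, 8, 9, 6] : List (Fin 11)).formPerm) :
    σ⁻¹ * τ⁻¹ * σ * τ
        = ([0, 4, 10, 8, 6, 3, 9, 1, 7, 5, 2] : List (Fin 11)).formPerm ∧
      (σ⁻¹ * τ⁻¹ * σ * τ).IsCycle ∧ (σ⁻¹ * τ⁻¹ * σ * τ).support.card = 11 := by
  subst hσ hτ
  have h : ([0, 1, 2, 3, 4, 5, 6, 7, 8, 9, 10] : List (Fin 11)).formPerm⁻¹ *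
      ([0, 2, 7, 10, 5, 3, 4, 1, 8, 9, 6] : List (Fin 11)).formPerm⁻¹ *
      ([0, 1, 2, 3, 4, 5, 6, 7, 8, 9, 10] : List (Fin 11)).formPerm *
      ([0, 2, 7, 10, 5, 3, 4, 1, 8, 9, 6] : List (Fin 11)).formPerm
      = ([0, 4, 10, 8, 6, 3, 9, 1, 7, 5, 2] : List (Fin 11)).formPerm := by
    decide
  refine ⟨h, ?_, ?_⟩
  · rw [h]
    exact List.isCycle_formPerm (by decide) (by decide)
  · rw [h]
    decide
end

section
/- Let σ = (1,2,3,4,5,6,7,8,9,10,11) and τ = (1,3,4,7,11,10,8,2,5,6,9) be cyclic permutations of {1,...,11}. Then the commutator σ⁻¹ τ⁻¹ σ τ equals the 11-cycle (1,2,4,9,7,8,11,6,10,5,3); in particular it is a cycle of length 11. -/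
set_option maxRecDepth 10000

/-- For `σ = (1,…,11)` and `τ = (1,3,4,7,11,10,8,2,5,6,9)` (zero-based on `Fin 11`),
the commutator `σ⁻¹ τ⁻¹ σ τ` is the 11-cycle `(1,2,4,9,7,8,11,6,10,5,3)`. -/
theorem stmt_19 (σ τ : Equiv.Perm (Fin 11))
    (hσ : σ = ([0, 1, 2, 3, 4, 5, 6, 7, 8, 9, 10] : List (Fin 11)).formPerm)
    (hτ : τ = ([0, 2, 3, 6, 10, 9, 7, 1, 4, 5, 8] : List (Fin 11)).formPerm) :
    σ⁻¹ * τ⁻¹ * σ * τ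
        = ([0, 1, 3, 8, 6, 7, 10, 5, 9, 4, 2] : List (Fin 11)).formPerm ∧
      (σ⁻¹ * τ⁻¹ * σ * τ).IsCycle ∧ (σ⁻¹ * τ⁻¹ * σ * τ).support.card = 11 := by
  subst hσ hτ
  refine ⟨by decide, ?_, by decide⟩
  rw [show (([0, 1, 2, 3, 4, 5, 6, 7, 8, 9, 10] : List (Fin 11)).formPerm)⁻¹ *
      (([0, 2, 3, 6, 10, 9, 7, 1, 4, 5, 8] : List (Fin 11)).formPerm)⁻¹ *
      ([0, 1, 2, 3, 4, 5, 6, 7, 8, 9, 10] : List (Fin 11)).formPerm *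
      ([0, 2, 3, 6, 10, 9, 7, 1, 4, 5, 8] : List (Fin 11)).formPerm
      = ([0, 1, 3, 8, 6, 7, 10, 5, 9, 4, 2] : List (Fin 11)).formPerm from by decide]
  exact List.isCycle_formPerm (by decide) (by decide)
end
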